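/- arXiv:2403.02835 — 5 statements merged into one kernel-verified Lean document; each statement's English description precedes it below -/
import Mathlib

section
/- For tensors X ∈ ℂ^{n1×n2×n3} and Y ∈ ℂ^{n2×n4×n3}, the t-product Z = X * Y satisfies that, for each k ∈ {1,…,n3}, the k-th frontal slice of the Fourier transform of Z along mode 3 equals the matrix product of the k-th frontal slices of the Fourier transforms of X and Y: Ẑ^{(k)} = X̂^{(k)} · Ŷ^{(k)}. -/
open Complex Matrix BigOperators Kronecker

noncomputable section

/-- DFT along the third mode, applied slice-wise. -/
def dft {n1 n2 n3 : ℕ} (X : Fin n3 → Matrix (Fin n1) (Fin n2) ℂ) :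
    Fin n3 → Matrix (Fin n1) (Fin n2) ℂ :=
  fun k => ∑ j : Fin n3,
    Complex.exp (-2 * (Real.pi : ℂ) * Complex.I * ((k : ℕ) : ℂ) * ((j : ℕ) : ℂ) / (n3 : ℂ)) • X j

/-- Block circulant matrix of a third-order tensor. -/
def bcirc {n1 n2 n3 : ℕ} (X : Fin n3 → Matrix (Fin n1) (Fin n2) ℂ) :
    Matrix (Fin n3 × Fin n1) (Fin n3 × Fin n2) ℂ :=
  Matrix.of fun p q => X (p.1 - q.1) p.2 q.2

/-- Vertical stacking of the frontal slices. -/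
def bvec {n2 n4 n3 : ℕ} (Y : Fin n3 → Matrix (Fin n2) (Fin n4) ℂ) :
    Matrix (Fin n3 × Fin n2) (Fin n4) ℂ :=
  Matrix.of fun p c => Y p.1 p.2 c

/-- t-product of third-order tensors, defined via bvfold(bcirc(X)·bvec(Y)). -/
def tMul {n1 n2 n4 n3 : ℕ} (X : Fin n3 → Matrix (Fin n1) (Fin n2) ℂ)
    (Y : Fin n3 → Matrix (Fin n2) (Fin n4) ℂ) :
    Fin n3 → Matrix (Fin n1) (Fin n4) ℂ :=
  fun k => Matrix.of fun a c => (bcirc X * bvec Y) (k, a) c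

/-- Tensor conjugate transpose: conjugate-transpose each frontal slice and
reverse the order of slices 2 through n3. -/
def tH {n1 n2 n3 : ℕ} (X : Fin n3 → Matrix (Fin n1) (Fin n2) ℂ) :
    Fin n3 → Matrix (Fin n2) (Fin n1) ℂ :=
  fun k => (X (-k))ᴴ

/-- Identity tensor: first frontal slice the identity matrix, others zero. -/
def tId (n1 n3 : ℕ) : Fin n3 → Matrix (Fin n1) (Fin n1) ℂ :=
  fun k => if (k : ℕ) = 0 then 1 else 0

/-- Frobenius norm of a third-order tensor. -/
def fro {n1 n2 n3 : ℕ} (X : Fin n3 → Matrix (Fin n1) (Fin n2) ℂ) : ℝ :=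
  Real.sqrt (∑ k, ∑ i, ∑ j, ‖X k i j‖ ^ 2)

/-- Squared Frobenius norm of a matrix. -/
def mFrobSq {m n : ℕ} (A : Matrix (Fin m) (Fin n) ℂ) : ℝ :=
  ∑ i, ∑ j, ‖A i j‖ ^ 2

/-- Tubal rank: maximal rank of the Fourier-domain frontal slices. -/
def tubalRank {n1 n2 n3 : ℕ} (X : Fin n3 → Matrix (Fin n1) (Fin n2) ℂ) : ℕ :=
  Finset.univ.sup fun k => (dft X k).rank

/-- Mode-1 matricization. -/
def mode1 {n1 n2 n3 : ℕ} (X : Fin n3 → Matrix (Fin n1) (Fin n2) ℂ) :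
    Matrix (Fin n1) (Fin n2 × Fin n3) ℂ :=
  Matrix.of fun i p => X p.2 i p.1

/-- Mode-2 matricization. -/
def mode2 {n1 n2 n3 : ℕ} (X : Fin n3 → Matrix (Fin n1) (Fin n2) ℂ) :
    Matrix (Fin n2) (Fin n1 × Fin n3) ℂ :=
  Matrix.of fun j p => X p.2 p.1 j

/-- The n×n discrete Fourier matrix. -/
def dftMatrix (n : ℕ) : Matrix (Fin n) (Fin n) ℂ :=
  Matrix.of fun j k =>
    Complex.exp (-2 * (Real.pi : ℂ) * Complex.I * ((j : ℕ) : ℂ) * ((k : ℕ) : ℂ) / (n : ℂ))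

/-!
Unfolding `bcirc` and `bvec`, the t-product is the circular convolution
`(X * Y)_j = ∑ p, X_{j-p} Y_p` of the frontal slices. The weights `j ↦ exp (-2πi k j / n3)` of the
`k`-th Fourier slice form an additive character of `ℤ/n3`, and for any additive character the
twisted sum of a convolution is the product of the twisted sums.
-/

def fourierAddChar (n k : ℕ) [NeZero n] : AddChar (Fin n) ℂ where
  toFun j := Complex.exp (-2 * (Real.pi : ℂ) * Complex.I * (k : ℂ) * ((j : ℕ) : ℂ) / (n : ℂ))
  map_zero_eq_one' := by simp
  map_add_eq_mul' a b := by
    have hn : (n : ℂ) ≠ 0 := Nat.cast_ne_zero.mpr (NeZero.ne n)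
    set q := ((a : ℕ) + b) / n
    have hab : (((a + b : Fin n) : ℕ) : ℂ) = a + b - n * q := by
      rw [Fin.val_add, eq_sub_iff_add_eq, ← Nat.cast_mul, ← Nat.cast_add, Nat.mod_add_div]
      push_cast
      rfl
    rw [← Complex.exp_add, Complex.exp_eq_exp_iff_exists_int]
    refine ⟨k * q, ?_⟩
    rw [hab]
    field_simp
    push_cast
    ring

theorem dft_apply_eq_sum_fourierAddChar {n1 n2 n3 : ℕ} [NeZero n3]
    (X : Fin n3 → Matrix (Fin n1) (Fin n2) ℂ) (k : Fin n3) :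
    dft X k = ∑ j, fourierAddChar n3 k j • X j :=
  rfl

theorem tMul_apply_eq_sum {n1 n2 n4 n3 : ℕ} (X : Fin n3 → Matrix (Fin n1) (Fin n2) ℂ)
    (Y : Fin n3 → Matrix (Fin n2) (Fin n4) ℂ) (j : Fin n3) :
    tMul X Y j = ∑ p, X (j - p) * Y p := by
  ext a c
  simp only [tMul, bcirc, bvec, Matrix.of_apply, Matrix.mul_apply, Matrix.sum_apply,
    Fintype.sum_prod_type]

theorem Matrix.sum_addChar_smul_conv {G R l m n : Type*} [AddCommGroup G] [Fintype G]
    [CommSemiring R] [Fintype m] (χ : AddChar G R) (X : G → Matrix l m R)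
    (Y : G → Matrix m n R) :
    ∑ g, χ g • ∑ h, X (g - h) * Y h = (∑ g, χ g • X g) * ∑ h, χ h • Y h := by
  calc ∑ g, χ g • ∑ h, X (g - h) * Y h
      = ∑ h, ∑ g, χ g • (X (g - h) * Y h) := by
        simp_rw [Finset.smul_sum]
        exact Finset.sum_comm
    _ = ∑ h, ∑ g, χ (g + h) • (X g * Y h) := by
        exact Finset.sum_congr rfl fun h _ =>
          Fintype.sum_equiv (Equiv.subRight h) _ _ fun g => by simp
    _ = (∑ g, χ g • X g) * ∑ h, χ h • Y h := by
        simp_rw [Matrix.sum_mul, Matrix.mul_sum, Matrix.smul_mul, Matrix.mul_smul, smul_smul,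
          AddChar.map_add_eq_mul]
        exact Finset.sum_comm

theorem dft_tprod {n1 n2 n4 n3 : ℕ} (X : Fin n3 → Matrix (Fin n1) (Fin n2) ℂ)
    (Y : Fin n3 → Matrix (Fin n2) (Fin n4) ℂ) (k : Fin n3) :
    dft (tMul X Y) k = dft X k * dft Y k := by
  have : NeZero n3 := ⟨k.pos.ne'⟩
  simp only [dft_apply_eq_sum_fourierAddChar, tMul_apply_eq_sum]
  exact Matrix.sum_addChar_smul_conv _ X Y
end
end

section
/- The t-product is associative: for tensors X ∈ ℂ^{n1×n2×n3}, Y ∈ ℂ^{n2×n4×n3}, Z ∈ ℂ^{n4×n5×n3}, one has (X * Y) * Z = X * (Y * Z). -/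
/-!
Unfolding `bcirc` and `bvec`, the `k`-th frontal slice of `X * Y` is `∑ j, X (k - j) * Y j`:
the t-product is cyclic convolution over `ℤ/n3` of matrix-valued functions. Convolution over any
finite abelian group is associative, by associativity of the matrix product and the
substitution `i ↦ i + j` in the inner sum.
-/

open Complex Matrix BigOperators Kronecker

noncomputable section

def cyclicConv {G l m n R : Type*} [AddCommGroup G] [Fintype G] [Fintype m]
    [NonUnitalNonAssocSemiring R] (A : G → Matrix l m R) (B : G → Matrix m n R) :
    G → Matrix l n R :=
  fun k => ∑ j, A (k - j) * B j

theorem cyclicConv_assoc {G l m n p R : Type*} [AddCommGroup G] [Fintype G] [Fintype m]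
    [Fintype n] [NonUnitalSemiring R] (A : G → Matrix l m R) (B : G → Matrix m n R)
    (C : G → Matrix n p R) :
    cyclicConv (cyclicConv A B) C = cyclicConv A (cyclicConv B C) := by
  funext k
  calc ∑ j, (∑ i, A (k - j - i) * B i) * C j
      = ∑ j, ∑ i, A (k - (i + j)) * (B (i + j - j) * C j) := by
        simp only [Matrix.sum_mul, Matrix.mul_assoc, add_sub_cancel_right, sub_add_eq_sub_sub,
          sub_right_comm]
    _ = ∑ j, ∑ i, A (k - i) * (B (i - j) * C j) := by
        refine Finset.sum_congr rfl fun j _ => ?_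
        exact Fintype.sum_equiv (Equiv.addRight j) _ _ fun i => rfl
    _ = ∑ i, A (k - i) * ∑ j, B (i - j) * C j := by
        rw [Finset.sum_comm]
        simp only [Matrix.mul_sum]

theorem tMul_eq_cyclicConv {m p q n3 : ℕ} [NeZero n3] (A : Fin n3 → Matrix (Fin m) (Fin p) ℂ)
    (B : Fin n3 → Matrix (Fin p) (Fin q) ℂ) : tMul A B = cyclicConv A B := by
  funext k
  ext a c
  simp only [tMul, cyclicConv, bcirc, bvec, Matrix.mul_apply, Matrix.of_apply,
    Matrix.sum_apply, Fintype.sum_prod_type]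

theorem tprod_assoc {n1 n2 n4 n5 n3 : ℕ} (X : Fin n3 → Matrix (Fin n1) (Fin n2) ℂ)
    (Y : Fin n3 → Matrix (Fin n2) (Fin n4) ℂ) (Z : Fin n3 → Matrix (Fin n4) (Fin n5) ℂ) :
    tMul (tMul X Y) Z = tMul X (tMul Y Z) := by
  -- `Fin n3` is an additive group only for `n3 ≠ 0`
  rcases n3 with _ | n3
  · exact funext fun k => k.elim0
  simp only [tMul_eq_cyclicConv, cyclicConv_assoc]
end
end

section
/- For tensors X ∈ ℂ^{n1×n2×n3} and Y ∈ ℂ^{n2×n4×n3}, the conjugate transpose reverses t-products: (X * Y)^H = Y^H * X^H. -/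
open Complex Matrix BigOperators Kronecker

noncomputable section

/-! The t-product is circular convolution of frontal slices over `Fin n3`. Conjugate transposition
reverses each matrix product in the convolution sum, and the shift `j ↦ j - k` turns the reversed sum
back into a convolution, namely that of the reflected conjugate-transposed slices. -/

theorem tMul_apply {n1 n2 n4 n3 : ℕ} (X : Fin n3 → Matrix (Fin n1) (Fin n2) ℂ)
    (Y : Fin n3 → Matrix (Fin n2) (Fin n4) ℂ) (k : Fin n3) :
    tMul X Y k = ∑ j, X (k - j) * Y j := by
  ext a c
  simp only [tMul, bcirc, bvec, of_apply, mul_apply, Fintype.sum_prod_type, Matrix.sum_apply]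

theorem conjTranspose_sum_sub_mul {G R l m n : Type*} [AddCommGroup G] [Fintype G]
    [NonUnitalNonAssocSemiring R] [StarRing R] [Fintype m]
    (A : G → Matrix l m R) (B : G → Matrix m n R) (k : G) :
    (∑ j, A (k - j) * B j)ᴴ = ∑ j, (B (-(-k - j)))ᴴ * (A (-j))ᴴ := by
  simp only [conjTranspose_sum, conjTranspose_mul]
  refine Fintype.sum_equiv (Equiv.subRight k) _ _ fun j => ?_
  rw [Equiv.subRight_apply, neg_sub, neg_sub, sub_neg_eq_add, sub_add_cancel]

theorem tH_tprod {n1 n2 n4 n3 : ℕ} (X : Fin n3 → Matrix (Fin n1) (Fin n2) ℂ)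
    (Y : Fin n3 → Matrix (Fin n2) (Fin n4) ℂ) :
    tH (tMul X Y) = tMul (tH Y) (tH X) := by
  funext k
  have : NeZero n3 := NeZero.of_pos k.pos
  rw [tH, tMul_apply, tMul_apply, conjTranspose_sum_sub_mul, neg_neg]
  rfl
end
end

section
/- For any tensor X ∈ ℂ^{n1×n2×n3}, the tensor tubal rank satisfies rank_t(X) ≤ min{rank(X_(1)), rank(X_(2))}, where X_(1) and X_(2) are the mode-1 and mode-2 matricizations of X. -/
open Complex Matrix BigOperators Kronecker

noncomputable section

/-! Each Fourier-domain slice of `X` is a linear combination `∑ j, c j • X j` of the frontal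
slices. Its columns are combinations of the columns of `mode1 X`; transposing every slice turns
`mode2` into `mode1`, so the same argument bounds its row rank by the rank of `mode2 X`. -/

theorem sum_smul_eq_mode1_mul {n1 n2 n3 : ℕ} (X : Fin n3 → Matrix (Fin n1) (Fin n2) ℂ)
    (c : Fin n3 → ℂ) :
    ∑ j, c j • X j =
      mode1 X * Matrix.of fun (p : Fin n2 × Fin n3) (l : Fin n2) => if p.1 = l then c p.2 else 0 := by
  ext i l
  simp [Matrix.sum_apply, Matrix.mul_apply, mode1, Fintype.sum_prod_type, mul_comm]

theorem rank_sum_smul_le_rank_mode1 {n1 n2 n3 : ℕ} (X : Fin n3 → Matrix (Fin n1) (Fin n2) ℂ)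
    (c : Fin n3 → ℂ) : (∑ j, c j • X j).rank ≤ (mode1 X).rank := by
  rw [sum_smul_eq_mode1_mul]
  exact rank_mul_le_left _ _

theorem mode2_eq_mode1_transpose {n1 n2 n3 : ℕ} (X : Fin n3 → Matrix (Fin n1) (Fin n2) ℂ) :
    mode2 X = mode1 fun j => (X j)ᵀ :=
  rfl

theorem rank_sum_smul_le_rank_mode2 {n1 n2 n3 : ℕ} (X : Fin n3 → Matrix (Fin n1) (Fin n2) ℂ)
    (c : Fin n3 → ℂ) : (∑ j, c j • X j).rank ≤ (mode2 X).rank := by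
  rw [← rank_transpose, transpose_sum, mode2_eq_mode1_transpose]
  simpa only [transpose_smul] using rank_sum_smul_le_rank_mode1 (fun j => (X j)ᵀ) c

theorem tubalRank_le_tucker {n1 n2 n3 : ℕ} (X : Fin n3 → Matrix (Fin n1) (Fin n2) ℂ) :
    tubalRank X ≤ min (mode1 X).rank (mode2 X).rank :=
  Finset.sup_le fun _ _ =>
    le_min (rank_sum_smul_le_rank_mode1 X _) (rank_sum_smul_le_rank_mode2 X _)
end
end

section
/- (Orthogonal Procrustes, complex case) Let M ∈ ℂ^{n×r} with n ≥ r, and let M = L Σ R^H be a singular value decomposition with L ∈ ℂ^{n×r} having orthonormal columns, Σ diagonal with nonnegative entries, and R ∈ ℂ^{r×r} unitary. Then U* = L R^H maximizes Re tr(U M^H) over all U ∈ ℂ^{n×r} with U^H U = I_r. -/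
/-!
Writing `M = L Σ Rᴴ`, cyclicity of the trace gives `Re tr(U Mᴴ) = ∑ᵢ σᵢ Re (Lᴴ U R)ᵢᵢ`.
Since `L` and `U R` both have orthonormal columns, each `(Lᴴ U R)ᵢᵢ` is an inner product of two
unit vectors, so its real part is at most `1`; for `U = L Rᴴ` the matrix `Lᴴ U R` is the identity
and the bound `∑ᵢ σᵢ` is attained.
-/

open Complex Matrix BigOperators Kronecker

noncomputable section

namespace Matrix

variable {m n k : Type*} [Fintype m] [Fintype n]

lemma trace_mul_diagonal {α : Type*} [NonUnitalNonAssocSemiring α] [DecidableEq n]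
    (W : Matrix n n α) (d : n → α) : (W * diagonal d).trace = ∑ i, W i i * d i := by
  simp [trace, mul_diagonal]

open scoped ComplexOrder in
/-- `‖a - b‖² = 2 - 2 Re ⟪a, b⟫ ≥ 0` for the `i`-th columns `a`, `b` of `A` and `B`. -/
lemma re_conjTranspose_mul_apply_self_le_one [DecidableEq n] {A B : Matrix m n ℂ}
    (hA : Aᴴ * A = 1) (hB : Bᴴ * B = 1) (i : n) : ((Aᴴ * B) i i).re ≤ 1 := by
  have hpos : 0 ≤ (((A - B)ᴴ * (A - B)) i i).re :=
    (Complex.nonneg_iff.mp (posSemidef_conjTranspose_mul_self (A - B)).diag_nonneg).1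
  have hswap : (Bᴴ * A) i i = star ((Aᴴ * B) i i) := by
    rw [← conjTranspose_conjTranspose A, ← conjTranspose_mul, conjTranspose_apply,
      conjTranspose_conjTranspose]
  rw [conjTranspose_sub, Matrix.sub_mul, Matrix.mul_sub, Matrix.mul_sub, hA, hB] at hpos
  simp only [Matrix.sub_apply, hswap, one_apply_eq, Complex.sub_re, Complex.one_re,
    Complex.star_def, Complex.conj_re] at hpos
  linarith

lemma re_trace_mul_conjTranspose_svd [Fintype k] [DecidableEq n] (U : Matrix m k ℂ)
    (L : Matrix m n ℂ) (σ : n → ℝ) (R : Matrix k n ℂ) :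
    (U * (L * diagonal (fun i => (σ i : ℂ)) * Rᴴ)ᴴ).trace.re =
      ∑ i, ((Lᴴ * (U * R)) i i).re * σ i := by
  have hD : (diagonal fun i => (σ i : ℂ))ᴴ = diagonal fun i => (σ i : ℂ) := by
    rw [diagonal_conjTranspose]; congr; funext i; simp
  rw [conjTranspose_mul, conjTranspose_mul, conjTranspose_conjTranspose, hD,
    ← Matrix.mul_assoc, ← Matrix.mul_assoc, trace_mul_comm, ← Matrix.mul_assoc,
    trace_mul_diagonal, Complex.re_sum]
  simp [Complex.mul_re]

end Matrix

theorem orthogonal_procrustes_general {n r : ℕ}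
    (M L : Matrix (Fin n) (Fin r) ℂ) (sigma : Fin r → ℝ) (R : Matrix (Fin r) (Fin r) ℂ)
    (hL : Lᴴ * L = 1) (hsigma : ∀ i, 0 ≤ sigma i)
    (hR : Rᴴ * R = 1)
    (hM : M = L * Matrix.diagonal (fun i => ((sigma i : ℝ) : ℂ)) * Rᴴ) :
    ∀ U : Matrix (Fin n) (Fin r) ℂ, Uᴴ * U = 1 →
      ((U * Mᴴ).trace).re ≤ (((L * Rᴴ) * Mᴴ).trace).re := by
  intro U hU
  have hUR : (U * R)ᴴ * (U * R) = 1 := by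
    rw [conjTranspose_mul, Matrix.mul_assoc, ← Matrix.mul_assoc Uᴴ, hU, Matrix.one_mul, hR]
  have hopt : Lᴴ * (L * Rᴴ * R) = 1 := by
    rw [Matrix.mul_assoc, hR, Matrix.mul_one, hL]
  rw [hM, re_trace_mul_conjTranspose_svd, re_trace_mul_conjTranspose_svd, hopt]
  refine Finset.sum_le_sum fun i _ => ?_
  rw [one_apply_eq, Complex.one_re, one_mul]
  exact mul_le_of_le_one_left (hsigma i) (re_conjTranspose_mul_apply_self_le_one hL hUR i)

theorem orthogonal_procrustes {n r : ℕ} (hnr : r ≤ n)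
    (M L : Matrix (Fin n) (Fin r) ℂ) (sigma : Fin r → ℝ) (R : Matrix (Fin r) (Fin r) ℂ)
    (hL : Lᴴ * L = 1) (hsigma : ∀ i, 0 ≤ sigma i)
    (hR : Rᴴ * R = 1) (hRR : R * Rᴴ = 1)
    (hM : M = L * Matrix.diagonal (fun i => ((sigma i : ℝ) : ℂ)) * Rᴴ) :
    ∀ U : Matrix (Fin n) (Fin r) ℂ, Uᴴ * U = 1 →
      ((U * Mᴴ).trace).re ≤ (((L * Rᴴ) * Mᴴ).trace).re :=
  orthogonal_procrustes_general M L sigma R hL hsigma hR hM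
end
end
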